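/- Let Ω ⊂ ℝ² be a bounded Lipschitz domain, k ≥ k₀ > 0, f ∈ L²(Ω), g ∈ H^{1/2} on each edge of ∂Ω. The solution u of the modified Helmholtz problem −Δu + k²u = f in Ω, ∂_n u + iku = g on ∂Ω satisfies ‖u‖_{1,k,Ω} ≤ k^{−1/2}‖g‖_{L²(∂Ω)} + k^{−1}‖f‖_{L²(Ω)}, where ‖u‖²_{1,k,Ω} = k²‖u‖²_{L²(Ω)} + ‖∇u‖²_{L²(Ω)}. -/

import Mathlib

open MeasureTheory Complex
open scoped ENNReal

noncomputable section

/-- `∇u · ∇v̄`. -/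
def gradDot {d : ℕ} (u v : EuclideanSpace ℝ (Fin d) → ℂ) (x : EuclideanSpace ℝ (Fin d)) : ℂ :=
  ∑ i : Fin d, fderiv ℝ u x (EuclideanSpace.single i 1) *
    (starRingEnd ℂ) (fderiv ℝ v x (EuclideanSpace.single i 1))

/-- `‖∇u(x)‖²`. -/
def gradNormSq {d : ℕ} (u : EuclideanSpace ℝ (Fin d) → ℂ) (x : EuclideanSpace ℝ (Fin d)) : ℝ :=
  ∑ i : Fin d, ‖fderiv ℝ u x (EuclideanSpace.single i 1)‖^2

/-- membership in `H¹(Ω)`. -/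
def MemH1 {d : ℕ} (Ω : Set (EuclideanSpace ℝ (Fin d))) (u : EuclideanSpace ℝ (Fin d) → ℂ) : Prop :=
  MemLp u 2 (volume.restrict Ω) ∧ MemLp (fun x => ‖fderiv ℝ u x‖) 2 (volume.restrict Ω)

lemma memLp_sq_integrable {α : Type*} [MeasurableSpace α] {μ : Measure α} {F : Type*}
    [NormedAddCommGroup F] {v : α → F} (hv : MemLp v 2 μ) :
    Integrable (fun x => ‖v x‖^2) μ := by
  have := hv.integrable_norm_rpow (by norm_num) (by norm_num)
  simpa using this

lemma cs_integral {α : Type*} [MeasurableSpace α] {μ : Measure α} {f u : α → ℂ}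
    (hf : MemLp f 2 μ) (hu : MemLp u 2 μ) :
    ‖∫ x, f x * (starRingEnd ℂ) (u x) ∂μ‖ ≤
      Real.sqrt (∫ x, ‖f x‖^2 ∂μ) * Real.sqrt (∫ x, ‖u x‖^2 ∂μ) := by
  have h2 : Real.HolderConjugate 2 2 := Real.HolderConjugate.two_two
  have hf2 : MemLp (fun x => ‖f x‖) (ENNReal.ofReal 2) μ := by
    simpa using hf.norm
  have hu2 : MemLp (fun x => ‖u x‖) (ENNReal.ofReal 2) μ := by
    simpa using hu.norm
  calc ‖∫ x, f x * (starRingEnd ℂ) (u x) ∂μ‖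
      ≤ ∫ x, ‖f x * (starRingEnd ℂ) (u x)‖ ∂μ := norm_integral_le_integral_norm _
    _ = ∫ x, ‖f x‖ * ‖u x‖ ∂μ := by simp [norm_mul]
    _ ≤ (∫ x, ‖f x‖ ^ (2:ℝ) ∂μ) ^ ((1:ℝ)/2) * (∫ x, ‖u x‖ ^ (2:ℝ) ∂μ) ^ ((1:ℝ)/2) :=
        integral_mul_le_Lp_mul_Lq_of_nonneg h2
          (Filter.Eventually.of_forall fun x => norm_nonneg _)
          (Filter.Eventually.of_forall fun x => norm_nonneg _) hf2 hu2
    _ = Real.sqrt (∫ x, ‖f x‖^2 ∂μ) * Real.sqrt (∫ x, ‖u x‖^2 ∂μ) := by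
        rw [← Real.sqrt_eq_rpow, ← Real.sqrt_eq_rpow]
        congr 1 <;>
        · congr 1
          apply integral_congr_ae
          filter_upwards with x
          rw [show (2:ℝ) = ((2:ℕ):ℝ) by norm_num, Real.rpow_natCast]

lemma mul_conj_eq (z : ℂ) : z * (starRingEnd ℂ) z = ((‖z‖^2 : ℝ) : ℂ) := by
  rw [Complex.mul_conj, Complex.sq_norm]

set_option maxHeartbeats 1000000 in
/-- A priori bound for the modified Helmholtz problem `−Δu + k²u = f`, `∂_n u + iku = g`:
`‖u‖_{1,k,Ω} ≤ k^{-1/2}‖g‖_{L²(∂Ω)} + k⁻¹‖f‖_{L²(Ω)}`. -/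
theorem stmt_17 (Ω : Set (EuclideanSpace ℝ (Fin 2)))
    (hΩo : IsOpen Ω) (hΩb : Bornology.IsBounded Ω)
    (σ : Measure (EuclideanSpace ℝ (Fin 2))) (hσ : σ (frontier Ω)ᶜ = 0)
    (k0 k : ℝ) (hk0 : 0 < k0) (hk : k0 ≤ k)
    (f g u : EuclideanSpace ℝ (Fin 2) → ℂ)
    (hf : MemLp f 2 (volume.restrict Ω)) (hg : MemLp g 2 σ)
    (hu1 : MemH1 Ω u) (huσ : MemLp u 2 σ)
    (hvar : ∀ v : EuclideanSpace ℝ (Fin 2) → ℂ, MemH1 Ω v → MemLp v 2 σ →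
      ((∫ x in Ω, (gradDot u v x + (k:ℂ)^2 * u x * (starRingEnd ℂ) (v x)))
        + Complex.I * (k:ℂ) * ∫ x, u x * (starRingEnd ℂ) (v x) ∂σ
      = (∫ x in Ω, f x * (starRingEnd ℂ) (v x)) + ∫ x, g x * (starRingEnd ℂ) (v x) ∂σ)) :
    Real.sqrt (k^2 * (∫ x in Ω, ‖u x‖^2) + ∫ x in Ω, gradNormSq u x)
      ≤ k ^ (-(1:ℝ)/2) * Real.sqrt (∫ x, ‖g x‖^2 ∂σ)
        + k⁻¹ * Real.sqrt (∫ x in Ω, ‖f x‖^2) := by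
  obtain ⟨huΩ, huD⟩ := hu1
  have hkpos : 0 < k := lt_of_lt_of_le hk0 hk
  -- integrability facts
  have hIu : Integrable (fun x => ‖u x‖^2) (volume.restrict Ω) := memLp_sq_integrable huΩ
  have hDu : Integrable (fun x => ‖fderiv ℝ u x‖^2) (volume.restrict Ω) := by
    have := memLp_sq_integrable huD
    simpa [Real.norm_eq_abs, sq_abs] using this
  have hGrad : Integrable (fun x => gradNormSq u x) (volume.restrict Ω) := by
    unfold gradNormSq
    apply integrable_finset_sum
    intro i _
    apply hDu.mono'
    · exact ((measurable_fderiv_apply_const ℝ u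
        (EuclideanSpace.single i 1)).norm.pow_const 2).aestronglyMeasurable
    · filter_upwards with x
      have h1 : ‖fderiv ℝ u x (EuclideanSpace.single i 1)‖ ≤ ‖fderiv ℝ u x‖ := by
        calc ‖fderiv ℝ u x (EuclideanSpace.single i 1)‖
            ≤ ‖fderiv ℝ u x‖ * ‖EuclideanSpace.single i (1:ℝ)‖ := (fderiv ℝ u x).le_opNorm _
          _ = ‖fderiv ℝ u x‖ := by rw [EuclideanSpace.norm_single]; simp
      have h2 := pow_le_pow_left₀ (norm_nonneg _) h1 2
      have h3 : ‖(‖fderiv ℝ u x (EuclideanSpace.single i 1)‖^2 : ℝ)‖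
          = ‖fderiv ℝ u x (EuclideanSpace.single i 1)‖^2 :=
        Real.norm_of_nonneg (by positivity)
      rw [h3]; exact h2
  -- pointwise rewrite of the sesquilinear integrands
  have hpt : ∀ x, gradDot u u x + (k:ℂ)^2 * u x * (starRingEnd ℂ) (u x)
      = ((gradNormSq u x + k^2 * ‖u x‖^2 : ℝ) : ℂ) := by
    intro x
    unfold gradDot gradNormSq
    simp only [mul_assoc, mul_conj_eq]
    push_cast
    ring
  have step3 : (∫ x in Ω, (gradNormSq u x + k^2 * ‖u x‖^2))
      = (∫ x in Ω, gradNormSq u x) + k^2 * ∫ x in Ω, ‖u x‖^2 := by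
    rw [integral_add hGrad (hIu.const_mul _), integral_const_mul]
  have hA : (∫ x in Ω, (gradDot u u x + (k:ℂ)^2 * u x * (starRingEnd ℂ) (u x)))
      = Complex.ofReal ((∫ x in Ω, gradNormSq u x) + k^2 * ∫ x in Ω, ‖u x‖^2) := by
    have step1 : (∫ x in Ω, (gradDot u u x + (k:ℂ)^2 * u x * (starRingEnd ℂ) (u x)))
        = ∫ x in Ω, ((gradNormSq u x + k^2 * ‖u x‖^2 : ℝ) : ℂ) :=
      integral_congr_ae (Filter.Eventually.of_forall hpt)
    have step2 : (∫ x in Ω, ((gradNormSq u x + k^2 * ‖u x‖^2 : ℝ) : ℂ))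
        = Complex.ofReal (∫ x in Ω, (gradNormSq u x + k^2 * ‖u x‖^2)) := integral_ofReal
    exact step1.trans (step2.trans (congrArg _ step3))
  have hB : (∫ x, u x * (starRingEnd ℂ) (u x) ∂σ)
      = Complex.ofReal (∫ x, ‖u x‖^2 ∂σ) := by
    have step1 : (∫ x, u x * (starRingEnd ℂ) (u x) ∂σ)
        = ∫ x, ((‖u x‖^2 : ℝ) : ℂ) ∂σ :=
      integral_congr_ae (Filter.Eventually.of_forall fun x => mul_conj_eq (u x))
    exact step1.trans integral_ofReal
  have E := hvar u ⟨huΩ, huD⟩ huσ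
  rw [hA, hB] at E
  -- real and imaginary parts
  set Z := (∫ x in Ω, f x * (starRingEnd ℂ) (u x)) + ∫ x, g x * (starRingEnd ℂ) (u x) ∂σ
    with hZdef
  have hre : (∫ x in Ω, gradNormSq u x) + k^2 * (∫ x in Ω, ‖u x‖^2) = Z.re := by
    have h := congrArg Complex.re E
    simp only [Complex.add_re, Complex.mul_re, Complex.mul_im, Complex.I_re, Complex.I_im,
      Complex.ofReal_re, Complex.ofReal_im] at h
    linarith
  have him : k * (∫ x, ‖u x‖^2 ∂σ) = Z.im := by
    have h := congrArg Complex.im E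
    simp only [Complex.add_im, Complex.add_re, Complex.mul_re, Complex.mul_im, Complex.I_re,
      Complex.I_im, Complex.ofReal_re, Complex.ofReal_im] at h
    linarith
  -- abbreviations
  set IG := ∫ x in Ω, gradNormSq u x with hIGdef
  set IU := ∫ x in Ω, ‖u x‖^2 with hIUdef
  set B := ∫ x, ‖u x‖^2 ∂σ with hBdef
  set F := Real.sqrt (∫ x in Ω, ‖f x‖^2) with hFdef
  set G := Real.sqrt (∫ x, ‖g x‖^2 ∂σ) with hGdef
  set aΩ := Real.sqrt IU with haΩdef
  set b := Real.sqrt B with hbdef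
  clear_value IG IU B F G aΩ b
  -- norm bound on Z
  have hZle : ‖Z‖ ≤ F * aΩ + G * b := by
    rw [hFdef, hGdef, haΩdef, hbdef, hIUdef, hBdef]
    exact (norm_add_le _ _).trans (add_le_add (cs_integral hf huΩ) (cs_integral hg huσ))
  -- nonnegativity
  have hIGnn : 0 ≤ IG := by
    rw [hIGdef]; apply integral_nonneg; intro x; unfold gradNormSq; positivity
  have hIUnn : 0 ≤ IU := by rw [hIUdef]; exact integral_nonneg fun x => by positivity
  have hBnn : 0 ≤ B := by rw [hBdef]; exact integral_nonneg fun x => by positivity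
  have hFnn : 0 ≤ F := by rw [hFdef]; exact Real.sqrt_nonneg _
  have hGnn : 0 ≤ G := by rw [hGdef]; exact Real.sqrt_nonneg _
  have haΩnn : 0 ≤ aΩ := by rw [haΩdef]; exact Real.sqrt_nonneg _
  have hbnn : 0 ≤ b := by rw [hbdef]; exact Real.sqrt_nonneg _
  set A := IG + k^2 * IU with hAdef
  have hAnn : 0 ≤ A := by positivity
  clear_value A
  set a := Real.sqrt A with hadef
  clear_value a
  have hann : 0 ≤ a := by rw [hadef]; exact Real.sqrt_nonneg _
  have hA_le : A ≤ F * aΩ + G * b := by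
    calc A = Z.re := hre
      _ ≤ ‖Z‖ := by exact Complex.re_le_norm Z
      _ ≤ _ := hZle
  have hB_le : k * B ≤ F * aΩ + G * b := by
    calc k * B = Z.im := him
      _ ≤ ‖Z‖ := by
          exact (le_abs_self _).trans (Complex.abs_im_le_norm Z)
      _ ≤ _ := hZle
  have hb2 : b^2 = B := by rw [hbdef]; exact Real.sq_sqrt hBnn
  have hkaΩ : k * aΩ ≤ a := by
    have h1 : k * aΩ = Real.sqrt (k^2 * IU) := by
      rw [Real.sqrt_mul (sq_nonneg k), Real.sqrt_sq hkpos.le, haΩdef]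
    rw [h1, hadef]
    exact Real.sqrt_le_sqrt (by nlinarith)
  set R := F/k * a + G * b with hRdef
  clear_value R
  have hRnn : 0 ≤ R := by rw [hRdef]; positivity
  have hFa : F * aΩ ≤ F/k * a := by
    rw [div_mul_eq_mul_div, le_div_iff₀ hkpos]
    nlinarith
  have hAR : A ≤ R := by rw [hRdef]; linarith
  have hBR : k * B ≤ R := by rw [hRdef]; linarith
  set s := Real.sqrt R with hsdef
  clear_value s
  have hs2 : s^2 = R := by rw [hsdef]; exact Real.sq_sqrt hRnn
  have hsnn : 0 ≤ s := by rw [hsdef]; exact Real.sqrt_nonneg _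
  have ha_le : a ≤ s := by rw [hadef, hsdef]; exact Real.sqrt_le_sqrt hAR
  have hks : 0 < Real.sqrt k := Real.sqrt_pos.mpr hkpos
  have hsb : Real.sqrt k * b ≤ s := by
    have h1 : Real.sqrt k * b = Real.sqrt (k * B) := by
      rw [Real.sqrt_mul hkpos.le, hbdef]
    rw [h1, hsdef]
    exact Real.sqrt_le_sqrt hBR
  have key : s^2 ≤ ((Real.sqrt k)⁻¹ * G + k⁻¹ * F) * s := by
    rw [hs2]
    have h2 : G * b ≤ G * ((Real.sqrt k)⁻¹ * s) := by
      apply mul_le_mul_of_nonneg_left _ hGnn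
      rw [inv_mul_eq_div, le_div_iff₀ hks]
      nlinarith
    have h1 : F/k * a ≤ F/k * s := mul_le_mul_of_nonneg_left ha_le (by positivity)
    have h3 : F/k * s + G * ((Real.sqrt k)⁻¹ * s) = ((Real.sqrt k)⁻¹ * G + k⁻¹ * F) * s := by
      field_simp
      ring
    rw [hRdef]
    linarith
  have hfin : a ≤ (Real.sqrt k)⁻¹ * G + k⁻¹ * F := by
    rcases eq_or_lt_of_le hsnn with h0 | hpos
    · have hR0 : R = 0 := by rw [← hs2, ← h0]; ring
      have hA0 : A = 0 := le_antisymm (hR0 ▸ hAR) hAnn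
      have ha0 : a = 0 := by rw [hadef, hA0, Real.sqrt_zero]
      rw [ha0]; positivity
    · have hsc : s ≤ (Real.sqrt k)⁻¹ * G + k⁻¹ * F := by nlinarith
      exact ha_le.trans hsc
  have hrw : k ^ (-(1:ℝ)/2) = (Real.sqrt k)⁻¹ := by
    rw [show (-(1:ℝ)/2) = -(1/2) by ring, Real.rpow_neg hkpos.le, Real.sqrt_eq_rpow]
  rw [hrw]
  calc Real.sqrt (k^2 * IU + IG) = a := by rw [hadef, hAdef]; congr 1; ring
    _ ≤ _ := hfin
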